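/- arXiv:1406.5448 — 4 statements merged into one kernel-verified Lean document; each statement's English description precedes it below -/
import Mathlib

section
/- Define λ_α = (α − α²/4)·((α² − 4α)(n−3) − 2(n−2)²(n−4)) / ((n−4+α)²(n−3) + (n−4)²) for n ≥ 5 and α ∈ (4−n, n). Then λ_α = 0 when α = 0 or α = 4, and λ_α > 0 when α ∈ (4−n, 0) ∪ (4, n). -/
theorem lambda_alpha_sign (n : ℕ) (hn : 5 ≤ n) (α : ℝ)
    (hα₁ : (4 : ℝ) - n < α) (hα₂ : α < n) (lam : ℝ)
    (hlam : lam = (α - α ^ 2 / 4) *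
      ((α ^ 2 - 4 * α) * ((n : ℝ) - 3) - 2 * ((n : ℝ) - 2) ^ 2 * ((n : ℝ) - 4)) /
      ((((n : ℝ) - 4 + α) ^ 2 * ((n : ℝ) - 3) + ((n : ℝ) - 4) ^ 2))) :
    ((α = 0 ∨ α = 4) → lam = 0) ∧
    ((α < 0 ∨ 4 < α) → 0 < lam) := by
  have hn' : (5 : ℝ) ≤ (n : ℝ) := by exact_mod_cast hn
  subst hlam
  constructor
  · rintro (rfl | rfl) <;> norm_num
  · intro h
    have hden : (0 : ℝ) < ((n : ℝ) - 4 + α) ^ 2 * ((n : ℝ) - 3) + ((n : ℝ) - 4) ^ 2 := by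
      nlinarith [sq_nonneg ((n : ℝ) - 4 + α), sq_nonneg ((n : ℝ) - 4)]
    apply div_pos _ hden
    have hA : α - α ^ 2 / 4 < 0 := by
      rcases h with h | h <;> nlinarith
    have hF : (α ^ 2 - 4 * α) * ((n : ℝ) - 3) - 2 * ((n : ℝ) - 2) ^ 2 * ((n : ℝ) - 4) < 0 := by
      rcases h with h | h
      · nlinarith [mul_pos (sub_pos.mpr hα₁) (sub_pos.mpr hα₂)]
      · nlinarith [mul_pos (sub_pos.mpr hα₁) (sub_pos.mpr hα₂)]
    exact mul_pos_of_neg_of_neg hA hF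
end

section
/- Let n ≥ 5 and α ∈ (0, 4). Then λ_α = (α − α²/4)·((α² − 4α)(n−3) − 2(n−2)²(n−4)) / ((n−4+α)²(n−3) + (n−4)²) satisfies λ_α > −(n−α)²/4. -/
theorem lambda_alpha_gt (n : ℕ) (hn : 5 ≤ n) (α : ℝ)
    (hα₁ : 0 < α) (hα₂ : α < 4) (lam : ℝ)
    (hlam : lam = (α - α ^ 2 / 4) *
      ((α ^ 2 - 4 * α) * ((n : ℝ) - 3) - 2 * ((n : ℝ) - 2) ^ 2 * ((n : ℝ) - 4)) /
      ((((n : ℝ) - 4 + α) ^ 2 * ((n : ℝ) - 3) + ((n : ℝ) - 4) ^ 2))) :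
    -(((n : ℝ) - α) ^ 2 / 4) < lam := by
  have hN : (5 : ℝ) ≤ (n : ℝ) := by exact_mod_cast hn
  set N : ℝ := (n : ℝ) with hNdef
  have hD : 0 < (N - 4 + α) ^ 2 * (N - 3) + (N - 4) ^ 2 := by nlinarith
  rw [hlam, lt_div_iff₀ hD]
  have hs : (1:ℝ) ≤ N - 4 := by linarith
  have hs0 : (0:ℝ) < N - 4 := by linarith
  have hA : (0:ℝ) ≤ (N-4)^2 * (16 - α^2) := by
    apply mul_nonneg (sq_nonneg _); nlinarith
  have hB : (0:ℝ) ≤ (N-4)^3 * (8 - 2*α) := by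
    apply mul_nonneg (by positivity); linarith
  have hp2 : (0:ℝ) < (N-4)^2 := by positivity
  have hp3 : (0:ℝ) < (N-4)^3 := by positivity
  have hp4 : (0:ℝ) < (N-4)^4 := by positivity
  have hp5 : (0:ℝ) < (N-4)^5 := by positivity
  nlinarith [hA, hB, hp2, hp3, hp4, hp5]
end

section
/- Let n ≥ 5, α ∈ (4−n, n) and let u(x) = |x|^{(4−n−α)/2} w(−log|x|) with w ∈ C_c^∞(ℝ). Then ∫_{ℝⁿ} |x|^{α} |Δu|² dx = ω_n ∫_ℝ (|w''|² + 2δ̃_α |w'|² + δ_α |w|²) dt, where δ̃_α = (n−2)²/4 + (α−2)²/4 and δ_α = ((n−2)²/4 − (α−2)²/4)². -/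
open Real MeasureTheory Set

/-- The surface measure `ω_n = |S^{n-1}|` of the unit sphere in `ℝⁿ`. -/
noncomputable def sphereMeas (n : ℕ) : ℝ :=
  (n : ℝ) * (volume (Metric.ball (0 : EuclideanSpace ℝ (Fin n)) 1)).toReal

/-- The Laplacian of a real-valued function on Euclidean space. -/
noncomputable def lap {n : ℕ} (f : EuclideanSpace ℝ (Fin n) → ℝ)
    (x : EuclideanSpace ℝ (Fin n)) : ℝ :=
  ∑ i : Fin n, fderiv ℝ (fun y => fderiv ℝ f y (EuclideanSpace.single i 1)) x
    (EuclideanSpace.single i 1)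

set_option linter.unusedSectionVars false


lemma int_deriv_zero {f f' : ℝ → ℝ} (hf : ∀ t, HasDerivAt f (f' t) t)
    (hc : HasCompactSupport f) (hcont : Continuous f') : ∫ t, f' t = 0 := by
  have hfd : f' = deriv f := funext fun t => ((hf t).deriv).symm
  obtain ⟨R, hR⟩ := hc.isCompact.isBounded.subset_closedBall 0
  have hsub : Function.support f' ⊆ Ioc (-(R+1)) (R+1) := by
    intro t ht
    have h1 : t ∈ tsupport f := support_deriv_subset (hfd ▸ ht)
    have := hR h1
    simp only [Metric.mem_closedBall, Real.dist_eq, sub_zero] at this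
    have := abs_le.mp this
    constructor <;> [linarith [this.1]; linarith [this.2]]
  rw [← intervalIntegral.integral_eq_integral_of_support_subset hsub]
  rw [intervalIntegral.integral_eq_sub_of_hasDerivAt (fun t _ => hf t)
    (hcont.intervalIntegrable _ _)]
  have h1 : f (R+1) = 0 := by
    apply image_eq_zero_of_notMem_tsupport
    intro h; have := abs_le.mp (by simpa [Real.dist_eq] using hR h); linarith [this.2]
  have h2 : f (-(R+1)) = 0 := by
    apply image_eq_zero_of_notMem_tsupport
    intro h; have := abs_le.mp (by simpa [Real.dist_eq] using hR h); linarith [this.1]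
  rw [h1, h2, sub_zero]
lemma ibp_main (w : ℝ → ℝ) (hw : ContDiff ℝ (⊤ : ℕ∞) w) (hwc : HasCompactSupport w) (c2 c0 : ℝ) :
    ∫ t, (deriv (deriv w) t - c2 * deriv w t + c0 * w t)^2
      = ∫ t, ((deriv (deriv w) t)^2 + (c2^2 - 2*c0) * (deriv w t)^2 + c0^2 * (w t)^2) := by
  have hw' : ContDiff ℝ ((⊤:ℕ∞) : WithTop ℕ∞) w := hw.of_le (by simp)
  set W1 := deriv w with hW1
  set W2 := deriv W1 with hW2
  have hw1 : ContDiff ℝ ((⊤:ℕ∞) : WithTop ℕ∞) W1 := by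
    have := hw'.iterate_deriv 1; simpa using this
  have hw2 : ContDiff ℝ ((⊤:ℕ∞) : WithTop ℕ∞) W2 := by
    have := hw'.iterate_deriv 2
    simpa [Function.iterate_succ, ← hW2, ← hW1] using this
  have cw : Continuous w := hw.continuous
  have cw1 : Continuous W1 := hw1.continuous
  have cw2 : Continuous W2 := hw2.continuous
  have hdw : ∀ t, HasDerivAt w (W1 t) t := fun t => (hw'.differentiable (by simp) t).hasDerivAt
  have hdw1 : ∀ t, HasDerivAt W1 (W2 t) t := fun t => (hw1.differentiable (by simp) t).hasDerivAt
  -- vanishing outside the support of w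
  have hts1 : tsupport W1 ⊆ tsupport w :=
    closure_minimal (support_deriv_subset) isClosed_closure
  have hvan : ∀ t ∉ tsupport w, w t = 0 ∧ W1 t = 0 ∧ W2 t = 0 := by
    intro t ht
    refine ⟨image_eq_zero_of_notMem_tsupport ht, ?_, ?_⟩
    · by_contra h
      exact ht (support_deriv_subset (by simpa [hW1] using h))
    · by_contra h
      exact ht (hts1 (support_deriv_subset (by simpa [hW2] using h)))
  have hcs : ∀ (F : ℝ → ℝ), (∀ t, w t = 0 → W1 t = 0 → W2 t = 0 → F t = 0) →
      HasCompactSupport F := by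
    intro F hF
    exact HasCompactSupport.intro hwc (fun t ht => by
      obtain ⟨h0, h1, h2⟩ := hvan t ht; exact hF t h0 h1 h2)
  set R : ℝ → ℝ := fun t => (W2 t)^2 + (c2^2 - 2*c0) * (W1 t)^2 + c0^2 * (w t)^2 with hR
  set g : ℝ → ℝ := fun t => -c2*(W1 t*W1 t) - c2*c0*(w t*w t) + 2*c0*(w t*W1 t) with hg
  set g' : ℝ → ℝ := fun t => (-2*c2)*(W1 t*W2 t) + (-2*c2*c0)*(w t*W1 t)
      + 2*c0*((W1 t)^2 + w t * W2 t) with hg'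
  have hdg : ∀ t, HasDerivAt g (g' t) t := by
    intro t
    have h : HasDerivAt g
        (-c2*(W2 t*W1 t + W1 t*W2 t) - c2*c0*(W1 t*w t + w t*W1 t)
          + 2*c0*(W1 t*W1 t + w t*W2 t)) t :=
      ((((hdw1 t).mul (hdw1 t)).const_mul (-c2)).sub
        (((hdw t).mul (hdw t)).const_mul (c2*c0))).add
        (((hdw t).mul (hdw1 t)).const_mul (2*c0))
    convert h using 1; simp only [hg']; ring
  have hcg' : Continuous g' := by fun_prop
  have hcR : Continuous R := by fun_prop
  have hIg' : Integrable g' := hcg'.integrable_of_hasCompactSupport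
    (hcs g' (fun t h0 h1 h2 => by simp [hg', h0, h1, h2]))
  have hIR : Integrable R := hcR.integrable_of_hasCompactSupport
    (hcs R (fun t h0 h1 h2 => by simp [hR, h0, h1, h2]))
  have hz : ∫ t, g' t = 0 :=
    int_deriv_zero hdg (hcs g (fun t h0 h1 h2 => by simp [hg, h0, h1])) hcg'
  have key : (fun t => (W2 t - c2 * W1 t + c0 * w t)^2) = fun t => R t + g' t := by
    funext t; simp only [hR, hg']; ring
  calc ∫ t, (W2 t - c2 * W1 t + c0 * w t)^2 = ∫ t, (R t + g' t) := by rw [key]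
    _ = (∫ t, R t) + ∫ t, g' t := integral_add hIR hIg'
    _ = ∫ t, R t := by rw [hz, add_zero]
section G
variable (w : ℝ → ℝ) (γ : ℝ)

noncomputable def Gf : ℝ → ℝ := fun s => s ^ (γ/2) * w (-(Real.log s)/2)

noncomputable def Gf₁ : ℝ → ℝ := fun s =>
  (γ/2 * s^(γ/2-1)) * w (-(Real.log s)/2)
    + s^(γ/2) * (deriv w (-(Real.log s)/2) * (-s⁻¹/2))

noncomputable def Gf₂ : ℝ → ℝ := fun s =>
  ((γ/2 * ((γ/2-1) * s^(γ/2-1-1))) * w (-(Real.log s)/2)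
      + (γ/2 * s^(γ/2-1)) * (deriv w (-(Real.log s)/2) * (-s⁻¹/2)))
    + ((γ/2 * s^(γ/2-1)) * (deriv w (-(Real.log s)/2) * (-s⁻¹/2))
      + s^(γ/2) * ((deriv (deriv w) (-(Real.log s)/2) * (-s⁻¹/2)) * (-s⁻¹/2)
        + deriv w (-(Real.log s)/2) * (-(-(s^2)⁻¹)/2)))

variable {w γ}
variable (hw : ContDiff ℝ (⊤ : ℕ∞) w)
include hw

lemma nu_hasDerivAt {s : ℝ} (hs : 0 < s) :
    HasDerivAt (fun s : ℝ => -(Real.log s)/2) (-s⁻¹/2) s :=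
  ((Real.hasDerivAt_log hs.ne').neg).div_const 2

lemma Gf_hasDerivAt {s : ℝ} (hs : 0 < s) : HasDerivAt (Gf w γ) (Gf₁ w γ s) s := by
  have hdw : ∀ t, HasDerivAt w (deriv w t) t :=
    fun t => (hw.differentiable (by simp) t).hasDerivAt
  have h1 : HasDerivAt (fun s : ℝ => s ^ (γ/2)) (γ/2 * s^(γ/2-1)) s :=
    Real.hasDerivAt_rpow_const (Or.inl hs.ne')
  have h2 : HasDerivAt (fun s : ℝ => w (-(Real.log s)/2))
      (deriv w (-(Real.log s)/2) * (-s⁻¹/2)) s :=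
    (hdw _).comp s (nu_hasDerivAt hw hs)
  exact h1.mul h2

lemma Gf₁_hasDerivAt {s : ℝ} (hs : 0 < s) : HasDerivAt (Gf₁ w γ) (Gf₂ w γ s) s := by
  have hw1 : ContDiff ℝ ((⊤:ℕ∞) : WithTop ℕ∞) (deriv w) := by
    have := (hw.of_le (by simp)).iterate_deriv 1; simpa using this
  have hdw : ∀ t, HasDerivAt w (deriv w t) t :=
    fun t => (hw.differentiable (by simp) t).hasDerivAt
  have hdw1 : ∀ t, HasDerivAt (deriv w) (deriv (deriv w) t) t :=
    fun t => (hw1.differentiable (by simp) t).hasDerivAt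
  have hν := nu_hasDerivAt hw hs
  have hA : HasDerivAt (fun s : ℝ => (γ/2 * s^(γ/2-1)) * w (-(Real.log s)/2))
      ((γ/2 * ((γ/2-1) * s^(γ/2-1-1))) * w (-(Real.log s)/2)
        + (γ/2 * s^(γ/2-1)) * (deriv w (-(Real.log s)/2) * (-s⁻¹/2))) s := by
    have h1 : HasDerivAt (fun s : ℝ => γ/2 * s ^ (γ/2-1)) (γ/2 * ((γ/2-1) * s^(γ/2-1-1))) s :=
      (Real.hasDerivAt_rpow_const (Or.inl hs.ne')).const_mul (γ/2)
    exact h1.mul ((hdw _).comp s hν)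
  have hB : HasDerivAt (fun s : ℝ => s^(γ/2) * (deriv w (-(Real.log s)/2) * (-s⁻¹/2)))
      ((γ/2 * s^(γ/2-1)) * (deriv w (-(Real.log s)/2) * (-s⁻¹/2))
        + s^(γ/2) * ((deriv (deriv w) (-(Real.log s)/2) * (-s⁻¹/2)) * (-s⁻¹/2)
          + deriv w (-(Real.log s)/2) * (-(-(s^2)⁻¹)/2))) s := by
    have h1 : HasDerivAt (fun s : ℝ => s ^ (γ/2)) (γ/2 * s^(γ/2-1)) s :=
      Real.hasDerivAt_rpow_const (Or.inl hs.ne')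
    have h2 : HasDerivAt (fun s : ℝ => deriv w (-(Real.log s)/2))
        (deriv (deriv w) (-(Real.log s)/2) * (-s⁻¹/2)) s := (hdw1 _).comp s hν
    have h3 : HasDerivAt (fun s : ℝ => -s⁻¹/2) (-(-(s^2)⁻¹)/2) s :=
      ((hasDerivAt_inv hs.ne').neg).div_const 2
    exact h1.mul (h2.mul h3)
  exact hA.add hB
end G

lemma master (n : ℕ) (α : ℝ) (w : ℝ → ℝ) {s : ℝ} (hs : 0 < s) :
    4*s*Gf₂ w ((4-(n:ℝ)-α)/2) s + 2*(n:ℝ)*Gf₁ w ((4-(n:ℝ)-α)/2) s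
      = s ^ ((((4-(n:ℝ)-α)/2)/2) - 1) * (deriv (deriv w) (-(Real.log s)/2)
          - (2-α) * deriv w (-(Real.log s)/2)
          + ((4-(n:ℝ)-α)*((n:ℝ)-α)/4) * w (-(Real.log s)/2)) := by
  have e1 : s ^ ((((4-(n:ℝ)-α)/2)/2)-1) = s^(((4-(n:ℝ)-α)/2)/2) / s := by
    rw [Real.rpow_sub hs, Real.rpow_one]
  have e2 : s ^ ((((4-(n:ℝ)-α)/2)/2)-1-1) = s^(((4-(n:ℝ)-α)/2)/2) / s / s := by
    rw [Real.rpow_sub hs, Real.rpow_sub hs, Real.rpow_one]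
  simp only [Gf₁, Gf₂, e1, e2]
  field_simp
  ring

lemma lap_formula (n : ℕ) (α : ℝ) (hne : (4-(n:ℝ)-α) ≠ 0)
    (w : ℝ → ℝ) (hw : ContDiff ℝ (⊤ : ℕ∞) w)
    (u : EuclideanSpace ℝ (Fin n) → ℝ)
    (hu : ∀ x, u x = ‖x‖ ^ ((4 - (n : ℝ) - α) / 2) * w (-Real.log ‖x‖))
    {x : EuclideanSpace ℝ (Fin n)} (hx : x ≠ 0) :
    lap u x = ‖x‖ ^ ((4-(n:ℝ)-α)/2 - 2) *
      (deriv (deriv w) (-Real.log ‖x‖) - (2-α) * deriv w (-Real.log ‖x‖)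
        + ((4-(n:ℝ)-α)*((n:ℝ)-α)/4) * w (-Real.log ‖x‖)) := by
  set γ : ℝ := (4-(n:ℝ)-α)/2 with hγdef
  have hγ : γ ≠ 0 := div_ne_zero hne two_ne_zero
  have hγ2 : γ/2 ≠ 0 := div_ne_zero hγ two_ne_zero
  set Q : EuclideanSpace ℝ (Fin n) → ℝ := fun y => ‖y‖^2 with hQdef
  -- rewrite u as Gf ∘ Q
  have hpow : ∀ y : EuclideanSpace ℝ (Fin n), y ≠ 0 →
      (Q y) ^ (γ/2) = ‖y‖ ^ γ ∧ -(Real.log (Q y))/2 = -Real.log ‖y‖ := by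
    intro y hy
    constructor
    · show ((‖y‖^2 : ℝ)) ^ (γ/2) = ‖y‖ ^ γ
      rw [← Real.rpow_natCast ‖y‖ 2, ← Real.rpow_mul (norm_nonneg y)]
      congr 1
      push_cast; ring
    · show -(Real.log (‖y‖^2))/2 = -Real.log ‖y‖
      rw [Real.log_pow]
      push_cast; ring
  have huq : u = fun y => Gf w γ (Q y) := by
    funext y
    by_cases hy : y = 0
    · subst hy
      have hQ0 : Q (0 : EuclideanSpace ℝ (Fin n)) = 0 := by simp [hQdef]
      rw [hu, Gf, hQ0, norm_zero, Real.zero_rpow hγ, Real.zero_rpow hγ2, zero_mul, zero_mul]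
    · obtain ⟨h1, h2⟩ := hpow y hy
      rw [hu, Gf, h1, h2]
  have hQ : ∀ y : EuclideanSpace ℝ (Fin n), HasFDerivAt Q (2 • innerSL ℝ y) y :=
    fun y => (hasStrictFDerivAt_norm_sq y).hasFDerivAt
  have hQpos : ∀ y : EuclideanSpace ℝ (Fin n), y ≠ 0 → 0 < Q y := by
    intro y hy; have := norm_pos_iff.mpr hy; positivity
  -- first derivative
  have hfd : ∀ y : EuclideanSpace ℝ (Fin n), y ≠ 0 →
      HasFDerivAt u (Gf₁ w γ (Q y) • (2 • innerSL ℝ y)) y := by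
    intro y hy
    rw [huq]
    exact (Gf_hasDerivAt hw (hQpos y hy)).comp_hasFDerivAt y (hQ y)
  have happ : ∀ (y : EuclideanSpace ℝ (Fin n)) (i : Fin n),
      (innerSL ℝ y) (EuclideanSpace.single i 1) = y i := by
    intro y i
    simp [EuclideanSpace.inner_single_right]
  have hfd_app : ∀ y : EuclideanSpace ℝ (Fin n), y ≠ 0 → ∀ i : Fin n,
      fderiv ℝ u y (EuclideanSpace.single i 1) = Gf₁ w γ (Q y) * (2 * y i) := by
    intro y hy i
    rw [(hfd y hy).fderiv]
    simp [happ y i]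
  -- second derivative terms
  have hterm : ∀ i : Fin n,
      fderiv ℝ (fun y => fderiv ℝ u y (EuclideanSpace.single i 1)) x
        (EuclideanSpace.single i 1)
        = 2 * Gf₁ w γ (Q x) + (2 * x i) * (Gf₂ w γ (Q x) * (2 * x i)) := by
    intro i
    have hev : (fun y => fderiv ℝ u y (EuclideanSpace.single i 1))
        =ᶠ[nhds x] fun y => Gf₁ w γ (Q y) * (2 * y i) := by
      filter_upwards [isOpen_compl_singleton.mem_nhds hx] with y hy
      exact hfd_app y hy i
    rw [Filter.EventuallyEq.fderiv_eq hev]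
    have hc : HasFDerivAt (fun y : EuclideanSpace ℝ (Fin n) => Gf₁ w γ (Q y))
        (Gf₂ w γ (Q x) • (2 • innerSL ℝ x)) x :=
      (Gf₁_hasDerivAt hw (hQpos x hx)).comp_hasFDerivAt x (hQ x)
    have hd : HasFDerivAt (fun y : EuclideanSpace ℝ (Fin n) => 2 * y i)
        ((2:ℝ) • (EuclideanSpace.proj i : EuclideanSpace ℝ (Fin n) →L[ℝ] ℝ)) x :=
      (ContinuousLinearMap.hasFDerivAt
        (EuclideanSpace.proj i : EuclideanSpace ℝ (Fin n) →L[ℝ] ℝ)).const_mul (2:ℝ)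
    rw [(show HasFDerivAt (fun y : EuclideanSpace ℝ (Fin n) => Gf₁ w γ (Q y) * (2 * y i)) _ x from hc.mul hd).fderiv]
    have hps : (EuclideanSpace.proj i : EuclideanSpace ℝ (Fin n) →L[ℝ] ℝ)
        (EuclideanSpace.single i 1) = 1 := by
      show (EuclideanSpace.single i (1:ℝ)) i = 1
      simp
    simp only [ContinuousLinearMap.add_apply, ContinuousLinearMap.smul_apply, happ x i,
      hps, smul_eq_mul]
    ring
  -- sum up
  have hsum : lap u x = 2 * n * Gf₁ w γ (Q x) + 4 * Q x * Gf₂ w γ (Q x) := by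
    rw [lap]
    simp only [hterm]
    rw [Finset.sum_add_distrib, Finset.sum_const, Finset.card_univ, Fintype.card_fin]
    have hxx : ∑ i : Fin n, (2 * x i) * (Gf₂ w γ (Q x) * (2 * x i))
        = 4 * Q x * Gf₂ w γ (Q x) := by
      have hQx : Q x = ∑ i : Fin n, (x i)^2 := by
        show ‖x‖^2 = _
        rw [EuclideanSpace.norm_eq, sq_sqrt (by positivity)]
        simp [sq_abs]
      rw [hQx]
      rw [show (∑ i : Fin n, 2 * x i * (Gf₂ w γ (∑ i : Fin n, x i ^ 2) * (2 * x i)))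
          = ∑ i : Fin n, (4 * Gf₂ w γ (∑ i : Fin n, x i ^ 2)) * (x i ^ 2) from
        Finset.sum_congr rfl (fun i _ => by ring), ← Finset.mul_sum]
      ring
    rw [hxx]
    push_cast; ring
  rw [hsum]
  have hm := master n α w (hQpos x hx)
  rw [hγdef]
  rw [show 2 * (n:ℝ) * Gf₁ w ((4-(n:ℝ)-α)/2) (Q x) + 4 * Q x * Gf₂ w ((4-(n:ℝ)-α)/2) (Q x)
      = 4 * Q x * Gf₂ w ((4-(n:ℝ)-α)/2) (Q x) + 2 * (n:ℝ) * Gf₁ w ((4-(n:ℝ)-α)/2) (Q x)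
    from by ring, hm]
  obtain ⟨h1, h2⟩ := hpow x hx
  rw [h2]
  congr 1
  show (‖x‖^2 : ℝ) ^ ((4-(n:ℝ)-α)/2/2 - 1) = _
  rw [← Real.rpow_natCast ‖x‖ 2, ← Real.rpow_mul (norm_nonneg x)]
  congr 1
  push_cast
  ring


lemma sub_log (φ : ℝ → ℝ) (hφ : Continuous φ) (hc : HasCompactSupport φ) :
    ∫ r in Ioi (0:ℝ), r⁻¹ * φ (-Real.log r) = ∫ t, φ t := by
  obtain ⟨R', hR'⟩ := hc.isCompact.isBounded.subset_closedBall 0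
  set R : ℝ := |R'| with hRdef
  have hR : tsupport φ ⊆ Metric.closedBall 0 R :=
    hR'.trans (Metric.closedBall_subset_closedBall (le_abs_self R'))
  have hR0 : 0 ≤ R := abs_nonneg R'
  have hRsupp : ∀ t, t ∉ Icc (-(R+1)) (R+1) → φ t = 0 := by
    intro t ht
    apply image_eq_zero_of_notMem_tsupport
    intro hmem
    have := abs_le.mp (by simpa [Real.dist_eq] using hR hmem)
    exact ht ⟨by linarith [this.1], by linarith [this.2]⟩
  set a : ℝ := Real.exp (-(R+2)) with ha
  set b : ℝ := Real.exp (R+2) with hb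
  have ha0 : 0 < a := Real.exp_pos _
  have hab : a ≤ b := Real.exp_le_exp.mpr (by linarith)
  set F : ℝ → ℝ := fun r => r⁻¹ * φ (-Real.log r) with hF
  have hind : (Ioi (0:ℝ)).indicator F = (Ioc a b).indicator F := by
    funext r
    by_cases h1 : r ∈ Ioc a b
    · rw [indicator_of_mem h1, indicator_of_mem (mem_Ioi.mpr (lt_of_lt_of_le ha0 h1.1.le))]
    · rw [indicator_of_notMem h1]
      by_cases h2 : r ∈ Ioi (0:ℝ)
      · rw [indicator_of_mem h2]
        have hr0 : (0:ℝ) < r := h2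
        have : φ (-Real.log r) = 0 := by
          apply hRsupp
          intro hmem
          apply h1
          constructor
          · rw [ha, ← Real.exp_log hr0]
            exact Real.exp_lt_exp.mpr (by have := hmem.2; linarith)
          · rw [hb, ← Real.exp_log hr0]
            exact Real.exp_le_exp.mpr (by have := hmem.1; linarith)
        simp [hF, this]
      · rw [indicator_of_notMem h2]
  have step1 : ∫ r in Ioi (0:ℝ), F r = ∫ r in Ioc a b, F r := by
    rw [← integral_indicator measurableSet_Ioi, hind, integral_indicator measurableSet_Ioc]
  have step2 : ∫ r in Ioc a b, F r = ∫ r in a..b, F r :=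
    (intervalIntegral.integral_of_le hab).symm
  have hx0 : ∀ x ∈ uIcc a b, x ≠ 0 := by
    intro x hx
    rw [uIcc_of_le hab] at hx
    exact (lt_of_lt_of_le ha0 hx.1).ne'
  have step3 : ∫ r in a..b, (-r⁻¹) • φ (-Real.log r)
      = ∫ t in (-Real.log a)..(-Real.log b), φ t := by
    apply intervalIntegral.integral_comp_smul_deriv
      (f := fun r => -Real.log r) (f' := fun r => -r⁻¹)
    · intro x hx
      exact (Real.hasDerivAt_log (hx0 x hx)).neg
    · exact (continuousOn_inv₀.mono (fun x hx => hx0 x hx)).neg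
    · exact hφ
  have hla : -Real.log a = R+2 := by rw [ha, Real.log_exp]; ring
  have hlb : -Real.log b = -(R+2) := by rw [hb, Real.log_exp]
  have step4 : ∫ r in a..b, F r = ∫ t in (-(R+2))..(R+2), φ t := by
    have : ∫ r in a..b, F r = -∫ r in a..b, (-r⁻¹) • φ (-Real.log r) := by
      rw [← intervalIntegral.integral_neg]
      congr 1; funext r; simp [hF]
    rw [this, step3, hla, hlb, ← intervalIntegral.integral_symm]
  have step5 : ∫ t in (-(R+2))..(R+2), φ t = ∫ t, φ t := by
    apply intervalIntegral.integral_eq_integral_of_support_subset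
    intro t ht
    by_contra h
    have := hRsupp t (by
      intro hmem
      exact h ⟨by linarith [hmem.1], by linarith [hmem.2]⟩)
    exact ht this
  rw [step1, step2, step4, step5]

lemma compsupp_aux (w : ℝ → ℝ) (hwc : HasCompactSupport w) (F : ℝ → ℝ)
    (h : ∀ t, w t = 0 → deriv w t = 0 → deriv (deriv w) t = 0 → F t = 0) :
    HasCompactSupport F := by
  have hts1 : tsupport (deriv w) ⊆ tsupport w :=
    closure_minimal (support_deriv_subset) isClosed_closure
  refine HasCompactSupport.intro hwc (fun t ht => ?_)
  refine h t (image_eq_zero_of_notMem_tsupport ht) ?_ ?_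
  · by_contra hh; exact ht (support_deriv_subset hh)
  · by_contra hh; exact ht (hts1 (support_deriv_subset hh))

theorem emden_fowler_lap (n : ℕ) (hn : 5 ≤ n) (α : ℝ)
    (hα₁ : (4 : ℝ) - n < α) (hα₂ : α < n)
    (w : ℝ → ℝ) (hw : ContDiff ℝ (⊤ : ℕ∞) w) (hwc : HasCompactSupport w)
    (u : EuclideanSpace ℝ (Fin n) → ℝ)
    (hu : ∀ x, u x = ‖x‖ ^ ((4 - (n : ℝ) - α) / 2) * w (-Real.log ‖x‖)) :
    ∫ x : EuclideanSpace ℝ (Fin n), ‖x‖ ^ α * (lap u x) ^ 2 =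
      sphereMeas n *
        ∫ t : ℝ, (deriv (deriv w) t) ^ 2
          + 2 * (((n : ℝ) - 2) ^ 2 / 4 + (α - 2) ^ 2 / 4) * (deriv w t) ^ 2
          + ((((n : ℝ) - 2) ^ 2 / 4 - (α - 2) ^ 2 / 4)) ^ 2 * (w t) ^ 2 := by
  have hne : (4 - (n:ℝ) - α) ≠ 0 := ne_of_lt (by linarith)
  haveI : NeZero n := ⟨by omega⟩
  haveI hnt : Nontrivial (EuclideanSpace ℝ (Fin n)) := inferInstance
  have hw1 : ContDiff ℝ ((⊤:ℕ∞) : WithTop ℕ∞) (deriv w) := by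
    have := (hw.of_le (by simp)).iterate_deriv 1; simpa using this
  have hw2 : ContDiff ℝ ((⊤:ℕ∞) : WithTop ℕ∞) (deriv (deriv w)) := by
    have := hw1.iterate_deriv 1; simpa using this
  have hEcont : Continuous (fun t => (deriv (deriv w) t - (2-α) * deriv w t
      + ((4-(n:ℝ)-α)*((n:ℝ)-α)/4) * w t)^2) := by
    have c0 : Continuous w := hw.continuous
    have c1 : Continuous (deriv w) := hw1.continuous
    have c2 : Continuous (deriv (deriv w)) := hw2.continuous
    fun_prop
  have hEsupp : HasCompactSupport (fun t => (deriv (deriv w) t - (2-α) * deriv w t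
      + ((4-(n:ℝ)-α)*((n:ℝ)-α)/4) * w t)^2) :=
    compsupp_aux w hwc _ (fun t h0 h1 h2 => by simp [h0, h1, h2])
  have hlap : ∀ x : EuclideanSpace ℝ (Fin n), x ≠ 0 → lap u x = _ :=
    fun x hx => lap_formula n α hne w hw u hu hx
  set g : ℝ → ℝ := fun r => r ^ α * (r ^ ((4-(n:ℝ)-α)/2 - 2) *
      (deriv (deriv w) (-Real.log r) - (2-α) * deriv w (-Real.log r)
        + ((4-(n:ℝ)-α)*((n:ℝ)-α)/4) * w (-Real.log r)))^2 with hgdef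
  have hae : ∫ x : EuclideanSpace ℝ (Fin n), ‖x‖ ^ α * (lap u x)^2
      = ∫ x : EuclideanSpace ℝ (Fin n), g ‖x‖ := by
    apply integral_congr_ae
    have h0 : ∀ᵐ x : EuclideanSpace ℝ (Fin n), x ≠ 0 := by
      rw [ae_iff]
      have : {a : EuclideanSpace ℝ (Fin n) | ¬ a ≠ 0} = {0} := by
        ext x; simp
      rw [this]
      exact measure_singleton 0
    filter_upwards [h0] with x hx
    rw [hlap x hx, hgdef]
  rw [hae, integral_fun_norm_addHaar volume g]
  have hdim : Module.finrank ℝ (EuclideanSpace ℝ (Fin n)) = n := finrank_euclideanSpace_fin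
  rw [hdim]
  have hpt : ∀ r ∈ Ioi (0:ℝ), r ^ (n-1) • g r
      = r⁻¹ * ((deriv (deriv w) (-Real.log r) - (2-α) * deriv w (-Real.log r)
        + ((4-(n:ℝ)-α)*((n:ℝ)-α)/4) * w (-Real.log r))^2) := by
    intro r hr
    have hr0 : (0:ℝ) < r := hr
    have hnat : (r:ℝ) ^ (n-1) = r ^ (((n:ℝ)) - 1) := by
      rw [← Real.rpow_natCast r (n-1)]
      congr 1
      rw [Nat.cast_sub (by omega)]
      simp
    rw [smul_eq_mul, hgdef]
    simp only
    rw [hnat]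
    rw [show r ^ ((n:ℝ)-1) * (r ^ α * (r ^ ((4-(n:ℝ)-α)/2 - 2) * (deriv (deriv w) (-Real.log r) - (2-α) * deriv w (-Real.log r) + ((4-(n:ℝ)-α)*((n:ℝ)-α)/4) * w (-Real.log r)))^2)
        = (r ^ ((n:ℝ)-1) * r ^ α * r ^ ((4-(n:ℝ)-α)/2 - 2) * r ^ ((4-(n:ℝ)-α)/2 - 2)) * (deriv (deriv w) (-Real.log r) - (2-α) * deriv w (-Real.log r) + ((4-(n:ℝ)-α)*((n:ℝ)-α)/4) * w (-Real.log r))^2 from by ring]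
    rw [← Real.rpow_add hr0, ← Real.rpow_add hr0, ← Real.rpow_add hr0]
    rw [show ((n:ℝ) - 1 + α + ((4-(n:ℝ)-α)/2 - 2) + ((4-(n:ℝ)-α)/2 - 2)) = -1 by ring,
      Real.rpow_neg_one]
  rw [setIntegral_congr_fun measurableSet_Ioi hpt]
  rw [sub_log _ hEcont hEsupp]
  rw [ibp_main w hw hwc (2-α) ((4-(n:ℝ)-α)*((n:ℝ)-α)/4)]
  rw [show (∫ t : ℝ, ((deriv (deriv w) t)^2
      + ((2-α)^2 - 2*((4-(n:ℝ)-α)*((n:ℝ)-α)/4)) * (deriv w t)^2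
      + ((4-(n:ℝ)-α)*((n:ℝ)-α)/4)^2 * (w t)^2))
      = ∫ t : ℝ, ((deriv (deriv w) t) ^ 2
          + 2 * (((n : ℝ) - 2) ^ 2 / 4 + (α - 2) ^ 2 / 4) * (deriv w t) ^ 2
          + ((((n : ℝ) - 2) ^ 2 / 4 - (α - 2) ^ 2 / 4)) ^ 2 * (w t) ^ 2) from by
    congr 1; funext t; ring]
  rw [nsmul_eq_mul, smul_eq_mul, sphereMeas, measureReal_def]
  ring
end

section
/- Let U(x) = (1 + |x|²)^{−(n−4)/2} on ℝⁿ with n ≥ 5, and set u(x) = |x|^{−α/2} U(x) for α ∈ (4−n, n). Then ∫_{ℝⁿ} |x|^{α−2} |∇u|² dx = B_α ∫_{ℝⁿ} |x|^{−4} U² dx, where B_α = ((n−4+α)/2)² + (n−4)²/(4(n−3)). -/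
/-!
Both integrands are radial, and for `u = f ∘ ‖·‖` one has `‖∇u‖ = |f' ‖x‖|`, so polar coordinates
reduce the identity to one on `(0, ∞)`. Expanding `f'²` turns the left side into a combination of
the moments `J(p, q) = ∫₀^∞ rᵖ / (1 + r²)^q dr`, and the right side into a multiple of one of them.
Integrating the derivative of `r^(a+1) / (1 + r²)^(b+1)` gives
`(a + 1) J(a, b + 1) = 2 (b + 1) J(a + 2, b + 2)`, and two instances of this relation express all
three moments through a single one.
-/

open Real MeasureTheory Set Filter Topology

section

variable {E : Type*} [NormedAddCommGroup E] [InnerProductSpace ℝ E]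

theorem hasFDerivAt_norm {x : E} (hx : x ≠ 0) :
    HasFDerivAt (‖·‖) (‖x‖⁻¹ • innerSL ℝ x) x := by
  have hsqrt : HasDerivAt sqrt (1 / (2 * √(‖x‖ ^ 2))) (‖x‖ ^ 2) :=
    hasDerivAt_sqrt (by positivity)
  have h := hsqrt.comp_hasFDerivAt x (hasStrictFDerivAt_norm_sq x).hasFDerivAt
  simp only [Function.comp_def, sqrt_sq (norm_nonneg _)] at h
  refine h.congr_fderiv ?_
  ext y
  simp only [smul_apply, innerSL_apply_apply, smul_eq_mul, nsmul_eq_mul, Nat.cast_ofNat]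
  field_simp

theorem HasDerivAt.hasGradientAt_comp_norm [CompleteSpace E] {f : ℝ → ℝ} {f' : ℝ} {x : E}
    (hx : x ≠ 0) (hf : HasDerivAt f f' ‖x‖) :
    HasGradientAt (fun y => f ‖y‖) ((f' / ‖x‖) • x) x := by
  rw [hasGradientAt_iff_hasFDerivAt]
  refine (hf.comp_hasFDerivAt x (hasFDerivAt_norm hx)).congr_fderiv ?_
  ext y
  simp only [smul_apply, coe_innerSL_apply, smul_eq_mul, map_smul,
    InnerProductSpace.toDual_apply_apply]
  ring

theorem HasDerivAt.norm_gradient_comp_norm [CompleteSpace E] {f : ℝ → ℝ} {f' : ℝ} {x : E}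
    (hx : x ≠ 0) (hf : HasDerivAt f f' ‖x‖) :
    ‖gradient (fun y => f ‖y‖) x‖ = |f'| := by
  rw [(hf.hasGradientAt_comp_norm hx).gradient, norm_smul, norm_div, norm_norm,
    div_mul_cancel₀ _ (norm_ne_zero_iff.mpr hx), Real.norm_eq_abs]

end

theorem continuous_pow_div_one_add_sq_pow (p q : ℕ) :
    Continuous fun r : ℝ => r ^ p / (1 + r ^ 2) ^ q :=
  (continuous_pow p).div (by fun_prop) fun r => by positivity

theorem pow_div_one_add_sq_pow_le_rpow (p q : ℕ) {r : ℝ} (hr : 0 < r) :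
    r ^ p / (1 + r ^ 2) ^ q ≤ r ^ ((p : ℝ) - 2 * q) := by
  rw [rpow_sub hr]
  norm_cast
  rw [pow_mul]
  gcongr
  linarith

theorem integrableOn_pow_div_one_add_sq_pow {p q : ℕ} (h : p + 2 ≤ 2 * q) :
    IntegrableOn (fun r : ℝ => r ^ p / (1 + r ^ 2) ^ q) (Ioi 0) := by
  rw [← Ioc_union_Ioi_eq_Ioi zero_le_one]
  refine (continuous_pow_div_one_add_sq_pow p q).integrableOn_Ioc.union ?_
  have hexp : (p : ℝ) - 2 * q < -1 := by
    have : (p : ℝ) + 2 ≤ 2 * q := by exact_mod_cast h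
    linarith
  refine (integrableOn_Ioi_rpow_of_lt hexp one_pos).mono'
    (continuous_pow_div_one_add_sq_pow p q).aestronglyMeasurable.restrict ?_
  filter_upwards [ae_restrict_mem measurableSet_Ioi] with r (hr : 1 < r)
  rw [norm_of_nonneg (by positivity)]
  exact pow_div_one_add_sq_pow_le_rpow p q (one_pos.trans hr)

theorem tendsto_pow_div_one_add_sq_pow_atTop {p q : ℕ} (h : p < 2 * q) :
    Tendsto (fun r : ℝ => r ^ p / (1 + r ^ 2) ^ q) atTop (𝓝 0) := by
  have hexp : (p : ℝ) - 2 * q = -(2 * q - p) := by ring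
  have hlim : Tendsto (fun r : ℝ => r ^ ((p : ℝ) - 2 * q)) atTop (𝓝 0) := by
    rw [hexp]
    have hpq : (p : ℝ) < 2 * q := by exact_mod_cast h
    exact tendsto_rpow_neg_atTop (by linarith)
  refine squeeze_zero' ?_ ?_ hlim
  · filter_upwards [eventually_ge_atTop 0] with r hr
    positivity
  · filter_upwards [eventually_gt_atTop 0] with r hr
    exact pow_div_one_add_sq_pow_le_rpow p q hr

theorem hasDerivAt_pow_div_one_add_sq_pow (a b : ℕ) (r : ℝ) :
    HasDerivAt (fun r : ℝ => r ^ (a + 1) / (1 + r ^ 2) ^ (b + 1))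
      ((a + 1) * (r ^ a / (1 + r ^ 2) ^ (b + 1)) -
        2 * (b + 1) * (r ^ (a + 2) / (1 + r ^ 2) ^ (b + 2))) r := by
  have hnum : HasDerivAt (fun r : ℝ => r ^ (a + 1)) ((a + 1) * r ^ a) r := by
    simpa using hasDerivAt_pow (a + 1) r
  have hden : HasDerivAt (fun r : ℝ => (1 + r ^ 2) ^ (b + 1))
      ((b + 1) * (1 + r ^ 2) ^ b * (2 * r)) r := by
    simpa using ((hasDerivAt_pow 2 r).const_add 1).fun_pow (b + 1)
  refine (hnum.div hden (by positivity)).congr_deriv ?_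
  field_simp
  ring

theorem mul_integral_pow_div_one_add_sq_pow {a b : ℕ} (h : a ≤ 2 * b) :
    ((a : ℝ) + 1) * ∫ r in Ioi (0 : ℝ), r ^ a / (1 + r ^ 2) ^ (b + 1) =
      2 * ((b : ℝ) + 1) * ∫ r in Ioi (0 : ℝ), r ^ (a + 2) / (1 + r ^ 2) ^ (b + 2) := by
  have hint₁ := integrableOn_pow_div_one_add_sq_pow (p := a) (q := b + 1) (by omega)
  have hint₂ := integrableOn_pow_div_one_add_sq_pow (p := a + 2) (q := b + 2) (by omega)
  have hftc := integral_Ioi_of_hasDerivAt_of_tendsto'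
    (fun r _ => hasDerivAt_pow_div_one_add_sq_pow a b r)
    ((hint₁.const_mul _).sub (hint₂.const_mul _))
    (tendsto_pow_div_one_add_sq_pow_atTop (by omega))
  rw [integral_sub (hint₁.const_mul _) (hint₂.const_mul _), integral_const_mul,
    integral_const_mul] at hftc
  simpa [sub_eq_zero] using hftc

theorem rpow_neg_div_two_sq {x : ℝ} (hx : 0 ≤ x) (ν : ℝ) : (x ^ (-ν / 2)) ^ 2 = x ^ (-ν) := by
  rw [← rpow_mul_natCast hx]
  ring_nf

/-- The radial profile of `u`, with `ν = n - 4`. -/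
noncomputable def talentiProfile (α ν r : ℝ) : ℝ := r ^ (-α / 2) * (1 + r ^ 2) ^ (-ν / 2)

theorem sq_talentiProfile (α ν : ℝ) {r : ℝ} (hr : 0 ≤ r) :
    talentiProfile α ν r ^ 2 = r ^ (-α) * (1 + r ^ 2) ^ (-ν) := by
  rw [talentiProfile, mul_pow, rpow_neg_div_two_sq hr, rpow_neg_div_two_sq (by positivity)]

theorem hasDerivAt_talentiProfile (α ν : ℝ) {r : ℝ} (hr : 0 < r) :
    HasDerivAt (talentiProfile α ν)
      (-talentiProfile α ν r * (α / (2 * r) + ν * r / (1 + r ^ 2))) r := by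
  have hpos : 0 < 1 + r ^ 2 := by positivity
  have h₁ : HasDerivAt (fun r : ℝ => r ^ (-α / 2)) (-α / 2 * r ^ (-α / 2 - 1)) r :=
    hasDerivAt_rpow_const (Or.inl hr.ne')
  have h₂ : HasDerivAt (fun r : ℝ => (1 + r ^ 2) ^ (-ν / 2))
      (2 * r * (-ν / 2) * (1 + r ^ 2) ^ (-ν / 2 - 1)) r := by
    simpa using ((hasDerivAt_pow 2 r).const_add 1).rpow_const (p := -ν / 2) (Or.inl hpos.ne')
  refine (h₁.mul h₂).congr_deriv ?_
  rw [rpow_sub_one hr.ne', rpow_sub_one hpos.ne', talentiProfile]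
  field_simp
  ring

theorem pow_mul_rpow_mul_sq_deriv_talentiProfile (m : ℕ) (α : ℝ) {r : ℝ} (hr : 0 < r) :
    r ^ (m + 4) * (r ^ (α - 2) *
        (talentiProfile α (m + 1) r * (α / (2 * r) + (m + 1) * r / (1 + r ^ 2))) ^ 2) =
      α ^ 2 / 4 * (r ^ m / (1 + r ^ 2) ^ (m + 1)) +
        α * (m + 1) * (r ^ (m + 2) / (1 + r ^ 2) ^ (m + 2)) +
          (m + 1) ^ 2 * (r ^ (m + 4) / (1 + r ^ 2) ^ (m + 3)) := by
  have hpos : 0 < 1 + r ^ 2 := by positivity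
  have hr' : r ^ (α - 2) * r ^ (-α) = (r ^ 2)⁻¹ := by
    rw [← rpow_add hr, ← rpow_natCast, ← rpow_neg hr.le]
    ring_nf
  have hpos' : (1 + r ^ 2) ^ (-((m : ℝ) + 1)) = ((1 + r ^ 2) ^ (m + 1))⁻¹ := by
    rw [rpow_neg hpos.le]
    norm_cast
  calc _ = r ^ (m + 4) * (r ^ (α - 2) * r ^ (-α)) * (1 + r ^ 2) ^ (-((m : ℝ) + 1)) *
        (α / (2 * r) + (m + 1) * r / (1 + r ^ 2)) ^ 2 := by
        rw [mul_pow, sq_talentiProfile _ _ hr.le]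
        ring
    _ = _ := by
      rw [hr', hpos']
      field_simp
      ring

theorem pow_mul_rpow_neg_four_mul_one_add_sq_rpow (m : ℕ) {r : ℝ} (hr : 0 < r) :
    r ^ (m + 4) * (r ^ (-4 : ℝ) * (1 + r ^ 2) ^ (-((m : ℝ) + 1))) =
      r ^ m / (1 + r ^ 2) ^ (m + 1) := by
  rw [rpow_neg hr.le, rpow_neg (by positivity)]
  norm_cast
  field_simp
  ring

theorem integral_radial_weighted_grad_talentiProfile (m : ℕ) (α : ℝ) :
    ∫ r in Ioi (0 : ℝ), r ^ (m + 4) * (r ^ (α - 2) *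
        (talentiProfile α (m + 1) r * (α / (2 * r) + (m + 1) * r / (1 + r ^ 2))) ^ 2) =
      ((((m : ℝ) + 1 + α) / 2) ^ 2 + ((m : ℝ) + 1) ^ 2 / (4 * ((m : ℝ) + 2))) *
        ∫ r in Ioi (0 : ℝ), r ^ (m + 4) * (r ^ (-4 : ℝ) * (1 + r ^ 2) ^ (-((m : ℝ) + 1))) := by
  set J₁ := ∫ r in Ioi (0 : ℝ), r ^ m / (1 + r ^ 2) ^ (m + 1)
  set J₂ := ∫ r in Ioi (0 : ℝ), r ^ (m + 2) / (1 + r ^ 2) ^ (m + 2)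
  set J₃ := ∫ r in Ioi (0 : ℝ), r ^ (m + 4) / (1 + r ^ 2) ^ (m + 3)
  have hint₁ := integrableOn_pow_div_one_add_sq_pow (p := m) (q := m + 1) (by omega)
  have hint₂ := integrableOn_pow_div_one_add_sq_pow (p := m + 2) (q := m + 2) (by omega)
  have hint₃ := integrableOn_pow_div_one_add_sq_pow (p := m + 4) (q := m + 3) (by omega)
  have hlhs : ∫ r in Ioi (0 : ℝ), r ^ (m + 4) * (r ^ (α - 2) *
      (talentiProfile α (m + 1) r * (α / (2 * r) + (m + 1) * r / (1 + r ^ 2))) ^ 2) =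
      α ^ 2 / 4 * J₁ + α * (m + 1) * J₂ + (m + 1) ^ 2 * J₃ := by
    rw [setIntegral_congr_fun measurableSet_Ioi
        fun r hr => pow_mul_rpow_mul_sq_deriv_talentiProfile m α hr,
      integral_add _ (hint₃.const_mul _), integral_add (hint₁.const_mul _) (hint₂.const_mul _),
      integral_const_mul, integral_const_mul, integral_const_mul]
    exact (hint₁.const_mul _).add (hint₂.const_mul _)
  have hrhs : ∫ r in Ioi (0 : ℝ), r ^ (m + 4) * (r ^ (-4 : ℝ) * (1 + r ^ 2) ^ (-((m : ℝ) + 1))) =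
      J₁ :=
    setIntegral_congr_fun measurableSet_Ioi fun r hr => pow_mul_rpow_neg_four_mul_one_add_sq_rpow m hr
  have hJ₁ : J₁ = 2 * J₂ := by
    have := mul_integral_pow_div_one_add_sq_pow (a := m) (b := m) (by omega)
    have hm : (m : ℝ) + 1 ≠ 0 := by positivity
    apply mul_left_cancel₀ hm
    linear_combination this
  have hJ₃ : J₃ = (m + 3) / (2 * (m + 2)) * J₂ := by
    have := mul_integral_pow_div_one_add_sq_pow (a := m + 2) (b := m + 1) (by omega)
    push_cast at this
    field_simp
    linear_combination -this
  rw [hlhs, hrhs, hJ₁, hJ₃]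
  field_simp
  ring

theorem talenti_weighted_grad_identity_general (n : ℕ) (hn : 5 ≤ n) (α : ℝ)
    (U : EuclideanSpace ℝ (Fin n) → ℝ)
    (hU : ∀ x, U x = (1 + ‖x‖ ^ 2) ^ (-((n : ℝ) - 4) / 2))
    (u : EuclideanSpace ℝ (Fin n) → ℝ)
    (hu : ∀ x, u x = ‖x‖ ^ (-α / 2) * U x) :
    ∫ x : EuclideanSpace ℝ (Fin n), ‖x‖ ^ (α - 2) * ‖gradient u x‖ ^ 2 =
      ((((n : ℝ) - 4 + α) / 2) ^ 2 + ((n : ℝ) - 4) ^ 2 / (4 * ((n : ℝ) - 3))) *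
        ∫ x : EuclideanSpace ℝ (Fin n), ‖x‖ ^ (-4 : ℝ) * (U x) ^ 2 := by
  obtain ⟨m, rfl⟩ : ∃ m, n = m + 5 := ⟨n - 5, by omega⟩
  have hν : ((m + 5 : ℕ) : ℝ) - 4 = m + 1 := by push_cast; ring
  have hu' : u = fun x => talentiProfile α (m + 1) ‖x‖ := by
    funext x
    rw [hu, hU, hν, talentiProfile]
  have hgrad : (fun x : EuclideanSpace ℝ (Fin (m + 5)) => ‖x‖ ^ (α - 2) * ‖gradient u x‖ ^ 2)
      =ᵐ[volume] fun x => ‖x‖ ^ (α - 2) * (talentiProfile α (m + 1) ‖x‖ *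
        (α / (2 * ‖x‖) + (m + 1) * ‖x‖ / (1 + ‖x‖ ^ 2))) ^ 2 := by
    filter_upwards [compl_mem_ae_iff.mpr (measure_singleton 0)] with x (hx : x ≠ 0)
    rw [hu', (hasDerivAt_talentiProfile α _ (norm_pos_iff.mpr hx)).norm_gradient_comp_norm hx,
      sq_abs, neg_mul, neg_sq]
  have hU' : (fun x : EuclideanSpace ℝ (Fin (m + 5)) => ‖x‖ ^ (-4 : ℝ) * U x ^ 2) =
      fun x => ‖x‖ ^ (-4 : ℝ) * (1 + ‖x‖ ^ 2) ^ (-((m : ℝ) + 1)) := by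
    funext x
    rw [hU, hν, rpow_neg_div_two_sq (by positivity)]
  rw [integral_congr_ae hgrad, hU',
    integral_fun_norm_addHaar volume fun r => r ^ (α - 2) * (talentiProfile α (m + 1) r *
      (α / (2 * r) + (m + 1) * r / (1 + r ^ 2))) ^ 2,
    integral_fun_norm_addHaar volume fun r => r ^ (-4 : ℝ) * (1 + r ^ 2) ^ (-((m : ℝ) + 1))]
  simp only [finrank_euclideanSpace_fin, smul_eq_mul, show m + 5 - 1 = m + 4 by omega,
    integral_radial_weighted_grad_talentiProfile]
  push_cast
  ring

theorem talenti_weighted_grad_identity (n : ℕ) (hn : 5 ≤ n) (α : ℝ)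
    (hα₁ : (4 : ℝ) - n < α) (hα₂ : α < n)
    (U : EuclideanSpace ℝ (Fin n) → ℝ)
    (hU : ∀ x, U x = (1 + ‖x‖ ^ 2) ^ (-((n : ℝ) - 4) / 2))
    (u : EuclideanSpace ℝ (Fin n) → ℝ)
    (hu : ∀ x, u x = ‖x‖ ^ (-α / 2) * U x) :
    ∫ x : EuclideanSpace ℝ (Fin n), ‖x‖ ^ (α - 2) * ‖gradient u x‖ ^ 2 =
      ((((n : ℝ) - 4 + α) / 2) ^ 2 + ((n : ℝ) - 4) ^ 2 / (4 * ((n : ℝ) - 3))) *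
        ∫ x : EuclideanSpace ℝ (Fin n), ‖x‖ ^ (-4 : ℝ) * (U x) ^ 2 :=
  talenti_weighted_grad_identity_general n hn α U hU u hu
end
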